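/- Let m ≥ k ≥ 1, and let R be the quotient of the polynomial ring Q[c_1,...,c_k, c'_1,...,c'_m] by the ideal generated by the elements Σ_{i+j=l} c'_i c_j for 1 ≤ l ≤ m+k (with the convention c_0 = c'_0 = 1, c_j = 0 for j > k, c'_i = 0 for i > m). Then the image of c_1^m in R is nonzero. -/

import Mathlib

/-!
Restrict to the copy of `ℂPᵐ` in the Grassmannian of `k`-planes spanned by a moving line and a
fixed `(k-1)`-plane. There the tautological bundle is `O(-1) ⊕ ℂᵏ⁻¹`, so `c = 1 + x` and
`c' = (1 + x)⁻¹ = Σ (-x)ⁱ`, where `x` generates `H*(ℂPᵐ) = ℚ[x]/(xᵐ⁺¹)`. This assignment kills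
every relation and sends `c₁ᵐ` to `xᵐ ≠ 0`.
-/

open MvPolynomial

/-- The Chern class generators `c_1, ..., c_k` (with `c_0 = 1` and `c_j = 0`
for `j > k`) inside `ℚ[c_1,...,c_k, c'_1,...,c'_m]`. -/
noncomputable def cgen (k m j : ℕ) : MvPolynomial (Fin k ⊕ Fin m) ℚ :=
  if h0 : j = 0 then 1
  else if h : j ≤ k then X (Sum.inl ⟨j - 1, by omega⟩) else 0

/-- The complementary Chern class generators `c'_1, ..., c'_m`. -/
noncomputable def cgen' (k m i : ℕ) : MvPolynomial (Fin k ⊕ Fin m) ℚ :=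
  if h0 : i = 0 then 1
  else if h : i ≤ m then X (Sum.inr ⟨i - 1, by omega⟩) else 0

/-- The relation `Σ_{i+j=l} c'_i c_j`. -/
noncomputable def grassRel (k m l : ℕ) : MvPolynomial (Fin k ⊕ Fin m) ℚ :=
  ∑ p ∈ Finset.HasAntidiagonal.antidiagonal l, cgen' k m p.1 * cgen k m p.2

theorem Polynomial.mk_X_pow_ne_zero {R : Type*} [CommRing R] [Nontrivial R] {n N : ℕ}
    (h : n < N) :
    Ideal.Quotient.mk (Ideal.span {(Polynomial.X : Polynomial R) ^ N}) (Polynomial.X ^ n) ≠ 0 := by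
  rw [Ne, Ideal.Quotient.eq_zero_iff_dvd, Polynomial.X_pow_dvd_iff]
  exact fun hcoeff => by simpa using hcoeff n h

section LineSpecialization

variable {A : Type*} [CommRing A] [Algebra ℚ A] (k m : ℕ) (x : A)

noncomputable def lineSpecialization : Fin k ⊕ Fin m → A :=
  Sum.elim (fun j => if j.val = 0 then x else 0) (fun i => (-x) ^ (i.val + 1))

variable {k m x}

theorem aeval_lineSpecialization_cgen (hk : 1 ≤ k) (j : ℕ) :
    aeval (lineSpecialization k m x) (cgen k m j) = if j = 0 then 1 else if j = 1 then x else 0 := by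
  unfold cgen
  by_cases hj0 : j = 0
  · simp [hj0]
  by_cases hjk : j ≤ k
  · by_cases hj1 : j = 1
    · subst hj1
      simp [hk, lineSpecialization]
    · simp [hj0, hjk, hj1, lineSpecialization, show j - 1 ≠ 0 by omega]
  · simp [hj0, hjk, show j ≠ 1 by omega]

theorem aeval_lineSpecialization_cgen' (i : ℕ) :
    aeval (lineSpecialization k m x) (cgen' k m i) = if i ≤ m then (-x) ^ i else 0 := by
  unfold cgen'
  by_cases hi0 : i = 0
  · simp [hi0]
  by_cases him : i ≤ m
  · simp [hi0, him, lineSpecialization, Nat.sub_add_cancel (Nat.one_le_iff_ne_zero.mpr hi0)]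
  · simp [hi0, him]

theorem aeval_lineSpecialization_grassRel (hk : 1 ≤ k) (hx : x ^ (m + 1) = 0) {l : ℕ}
    (hl : 1 ≤ l) : aeval (lineSpecialization k m x) (grassRel k m l) = 0 := by
  obtain ⟨n, rfl⟩ : ∃ n, l = n + 1 := ⟨l - 1, by omega⟩
  have hc := aeval_lineSpecialization_cgen (m := m) (x := x) hk
  have hc' := aeval_lineSpecialization_cgen' (k := k) (m := m) (x := x)
  -- only the terms `c'ₙ₊₁ c₀` and `c'ₙ c₁` survive
  have hsum : aeval (lineSpecialization k m x) (grassRel k m (n + 1)) =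
      aeval (lineSpecialization k m x) (cgen' k m n) * x +
        aeval (lineSpecialization k m x) (cgen' k m (n + 1)) := by
    rw [grassRel, map_sum, Finset.Nat.sum_antidiagonal_eq_sum_range_succ_mk,
      Finset.sum_range_succ, Finset.sum_range_succ, Finset.sum_eq_zero]
    · simp [hc]
    · intro i hi
      rw [Finset.mem_range] at hi
      simp [hc, show n + 1 - i ≠ 0 by omega, show n + 1 - i ≠ 1 by omega]
  rw [hsum, hc', hc']
  rcases lt_trichotomy n m with hnm | rfl | hnm
  · simp only [if_pos hnm.le, if_pos (Nat.succ_le_of_lt hnm)]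
    ring
  · simp only [le_refl, if_true, Nat.not_succ_le_self, if_false, add_zero]
    rw [neg_pow, mul_assoc, ← pow_succ, hx, mul_zero]
  · simp [show ¬n ≤ m by omega, show ¬n + 1 ≤ m by omega]

theorem span_grassRel_le_ker_aeval_lineSpecialization (hk : 1 ≤ k) (hx : x ^ (m + 1) = 0)
    (L : ℕ) : Ideal.span ((Finset.Icc 1 L).image (grassRel k m) : Set (MvPolynomial _ ℚ)) ≤
      RingHom.ker (aeval (lineSpecialization k m x)) := by
  rw [Ideal.span_le]
  intro p hp
  obtain ⟨l, hl, rfl⟩ := Finset.mem_image.mp hp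
  exact aeval_lineSpecialization_grassRel hk hx (Finset.mem_Icc.mp hl).1

end LineSpecialization

theorem c1_pow_m_ne_zero_in_grassmannian_general (k m : ℕ) (hk : 1 ≤ k) :
    Ideal.Quotient.mk
        (Ideal.span ((Finset.Icc 1 (m + k)).image (grassRel k m) : Set (MvPolynomial (Fin k ⊕ Fin m) ℚ)))
        (cgen k m 1 ^ m) ≠ 0 := by
  set x := Ideal.Quotient.mk (Ideal.span {(Polynomial.X : Polynomial ℚ) ^ (m + 1)}) Polynomial.X
  have hx : x ^ (m + 1) = 0 := by rw [← map_pow, Ideal.Quotient.mk_singleton_self]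
  have hxm : x ^ m ≠ 0 := by
    rw [← map_pow]
    exact Polynomial.mk_X_pow_ne_zero m.lt_succ_self
  intro h
  have h0 := span_grassRel_le_ker_aeval_lineSpecialization hk hx (m + k)
    (Ideal.Quotient.eq_zero_iff_mem.mp h)
  rw [RingHom.mem_ker, map_pow, aeval_lineSpecialization_cgen hk] at h0
  exact hxm (by simpa using h0)

theorem c1_pow_m_ne_zero_in_grassmannian (k m : ℕ) (hk : 1 ≤ k) (hmk : k ≤ m) :
    Ideal.Quotient.mk
        (Ideal.span ((Finset.Icc 1 (m + k)).image (grassRel k m) : Set (MvPolynomial (Fin k ⊕ Fin m) ℚ)))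
        (cgen k m 1 ^ m) ≠ 0 :=
  c1_pow_m_ne_zero_in_grassmannian_general k m hk
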